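/- For all integers r ≥ 2, 1 ≤ ℓ ≤ r, J ≥ 0, every integer d ≥ J + 1, and every 1 ≤ j ≤ r, the power series A^J_{ℓ,j,(r−1)d+j} is divisible by q^{d(j−1)} in ℚ[[q]] (i.e., its coefficient of q^n vanishes for all n < d(j−1)); consequently, for each 2 ≤ j ≤ r and each n ≥ 0, the coefficient of q^n in A^J_{ℓ,j,(r−1)d+j} is zero for all sufficiently large d, so A^J_{ℓ,j,(r−1)d+j} tends to 0 in the q-adic topology as d → ∞. -/

import Mathlib

open PowerSeries Finset

/-- The coefficients `A^J_{ℓ,j,(r-1)d+j}` with `d = J + 1 + e`: `coefA r ℓ J e j` is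
`A^J_{ℓ,j,(r-1)(J+1+e)+j}`, defined by the initial conditions at `d = J+1` and the recursion
`A^J_{ℓ,j,(r-1)(d+1)+j} = q^{(d+1)(j-1)} Σ_{m=1}^{r-j+1} A^J_{ℓ,m,(r-1)d+m}`. -/
noncomputable def coefA (r ℓ J : ℕ) : ℕ → ℕ → PowerSeries ℚ
  | 0, j => if j ≤ r - ℓ + 1 then (PowerSeries.X : PowerSeries ℚ) ^ ((J+1)*(j-1)) else 0
  | e+1, j => (PowerSeries.X : PowerSeries ℚ) ^ ((J+1+(e+1))*(j-1)) *
      ∑ m ∈ Finset.Icc 1 (r - j + 1), coefA r ℓ J e m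

lemma coefA_dvd (r ℓ J : ℕ) (e j : ℕ) :
    (PowerSeries.X : PowerSeries ℚ) ^ ((J+1+e)*(j-1)) ∣ coefA r ℓ J e j := by
  cases e with
  | zero =>
    simp only [coefA]
    split
    · simp
    · exact dvd_zero _
  | succ e =>
    simp only [coefA]
    exact Dvd.intro _ rfl

lemma coefA_coeff_zero (r ℓ J : ℕ) (e j : ℕ) (n : ℕ) (hn : n < (J+1+e)*(j-1)) :
    PowerSeries.coeff n (coefA r ℓ J e j) = 0 := by
  obtain ⟨g, hg⟩ := coefA_dvd r ℓ J e j
  rw [hg, PowerSeries.coeff_X_pow_mul', if_neg (by omega)]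

/-- For `r ≥ 2`, `1 ≤ ℓ ≤ r`, `J ≥ 0`, every `d ≥ J + 1` and `1 ≤ j ≤ r`:
`q^{d(j-1)} ∣ A^J_{ℓ,j,(r-1)d+j}` (i.e. the coefficient of `qⁿ` vanishes for `n < d(j-1)`);
consequently for each `2 ≤ j ≤ r` and each `n`, the coefficient of `qⁿ` in
`A^J_{ℓ,j,(r-1)d+j}` is zero for all sufficiently large `d`. -/
theorem coefA_qadic_limit (r ℓ J : ℕ) (hr : 2 ≤ r) (hl1 : 1 ≤ ℓ) (hlr : ℓ ≤ r) :
    (∀ d, J + 1 ≤ d → ∀ j, 1 ≤ j → j ≤ r →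
      ((PowerSeries.X : PowerSeries ℚ) ^ (d*(j-1)) ∣ coefA r ℓ J (d - (J+1)) j) ∧
      (∀ n : ℕ, n < d*(j-1) → PowerSeries.coeff n (coefA r ℓ J (d - (J+1)) j) = 0)) ∧
    (∀ j, 2 ≤ j → j ≤ r → ∀ n : ℕ, ∃ N : ℕ, ∀ d, N ≤ d →
      PowerSeries.coeff n (coefA r ℓ J (d - (J+1)) j) = 0) := by
  have key : ∀ d, J + 1 ≤ d → ∀ j, (J+1+(d-(J+1)))*(j-1) = d*(j-1) := by
    intro d hd j; congr 1; omega
  constructor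
  · intro d hd j _ _
    refine ⟨?_, ?_⟩
    · have := coefA_dvd r ℓ J (d - (J+1)) j
      rwa [key d hd j] at this
    · intro n hn
      exact coefA_coeff_zero r ℓ J (d - (J+1)) j n (by rw [key d hd j]; exact hn)
  · intro j hj _ n
    refine ⟨max (J+1) (n+1), fun d hd => ?_⟩
    have hd1 : J + 1 ≤ d := le_trans (le_max_left _ _) hd
    apply coefA_coeff_zero
    rw [key d hd1 j]
    have : n + 1 ≤ d := le_trans (le_max_right _ _) hd
    have h1 : 1 ≤ j - 1 := by omega
    calc n < d := by omega
      _ = d * 1 := (mul_one d).symm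
      _ ≤ d * (j-1) := Nat.mul_le_mul_left d h1
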